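/- Let X_𝔻 = (X₁,X₂) be a 𝔻-random variable on a 𝔻-probabilistic space (Ω,Σ,P_𝔻) with X₁ P₁-integrable and X₂ P₂-integrable, let ℙ = {A_ι : ι ∈ ℕ} ⊂ Σ be a countable partition of Ω with P_𝔻(A_ι) ∈ 𝔻⁺ \ {(0,0)} for every ι, let 𝒜 = {A_{ι_n} : n ∈ ℕ} ⊆ ℙ be a subfamily, and put A = ∪_{n=1}^∞ A_{ι_n}. Then E_A(X_𝔻) · P_𝔻(A) = ∫_A X_𝔻 dP_𝔻 = P_𝔻(A) · Σ_{n=1}^∞ E_{A_{ι_n}}(X_𝔻) · P_𝔻(A_{ι_n}/A), where all products are componentwise in ℝ × ℝ and ∫_A Z_𝔻 dP_𝔻 = (∫_A Z₁ dP₁, ∫_A Z₂ dP₂). -/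

import Mathlib

/-!
On each component the statement reduces to two identities for a finite measure `P` and the
union `U` of disjoint measurable sets `Bₙ`. First, `E_S(X) ⬝ P(S) = ∫_S X` for every `S`, since
either `P(S) > 0` and the division cancels, or `P(S) = 0` and both sides vanish. Second, since
`Bₙ ⊆ U`, each term `E_{Bₙ}(X) ⬝ P(Bₙ/U)` equals `(∫_{Bₙ} X) / P(U)`, so countable additivity of
the integral sums the series to `(∫_U X) / P(U)`, and multiplying back by `P(U)` gives `∫_U X`.
-/

open MeasureTheory

/-- One idempotent component of the hyperbolic conditional expectation `E_B(X_𝔻)`: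
`cᵢ = (∫_B Xᵢ dPᵢ)/Pᵢ(B)` if `Pᵢ(B) > 0`, and `cᵢ = ∫_Ω Xᵢ dPᵢ` if `Pᵢ(B) = 0`. -/
noncomputable def hypCondExp {Ω : Type*} [MeasurableSpace Ω]
    (P : Measure Ω) (X : Ω → ℝ) (B : Set Ω) : ℝ :=
  if P B = 0 then ∫ w, X w ∂P else (∫ w in B, X w ∂P) / (P B).toReal

/-- One idempotent component of the hyperbolic conditional probability `P_𝔻(A/B)`:
`qᵢ = Pᵢ(A ∩ B)/Pᵢ(B)` if `Pᵢ(B) > 0`, and `qᵢ = Pᵢ(A)` if `Pᵢ(B) = 0`. -/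
noncomputable def hypCondProbAux {Ω : Type*} [MeasurableSpace Ω]
    (P : Measure Ω) (B A : Set Ω) : ℝ :=
  if P B = 0 then (P A).toReal else (P (A ∩ B)).toReal / (P B).toReal

section

variable {Ω : Type*} [MeasurableSpace Ω] {P : Measure Ω}

lemma hypCondExp_mul_toReal (X : Ω → ℝ) {S : Set Ω} (hS : P S ≠ ⊤) :
    hypCondExp P X S * (P S).toReal = ∫ w in S, X w ∂P := by
  unfold hypCondExp
  split_ifs with h
  · simp [h, setIntegral_measure_zero _ h]
  · exact div_mul_cancel₀ _ (ENNReal.toReal_ne_zero.mpr ⟨h, hS⟩)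

lemma hypCondProbAux_of_subset {U B : Set Ω} (hBU : B ⊆ U) (hU : P U ≠ 0) :
    hypCondProbAux P U B = (P B).toReal / (P U).toReal := by
  rw [hypCondProbAux, if_neg hU, Set.inter_eq_left.mpr hBU]

lemma hypCondProbAux_of_subset_of_measure_zero {U B : Set Ω} (hBU : B ⊆ U) (hU : P U = 0) :
    hypCondProbAux P U B = 0 := by
  simp [hypCondProbAux, hU, measure_mono_null hBU hU]

lemma hasSum_hypCondExp_mul_hypCondProbAux {ι : Type*} [Countable ι] {X : Ω → ℝ}
    {B : ι → Set Ω} (hX : IntegrableOn X (⋃ n, B n) P) (hB : ∀ n, MeasurableSet (B n))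
    (hdisj : Pairwise (Function.onFun Disjoint B)) (hfin : P (⋃ n, B n) ≠ ⊤) :
    HasSum (fun n => hypCondExp P X (B n) * hypCondProbAux P (⋃ m, B m) (B n))
      ((∫ w in ⋃ n, B n, X w ∂P) / (P (⋃ n, B n)).toReal) := by
  by_cases hU : P (⋃ n, B n) = 0
  · simp [hypCondProbAux_of_subset_of_measure_zero (Set.subset_iUnion B _) hU,
      setIntegral_measure_zero _ hU, hasSum_zero]
  · have hterm : ∀ n, hypCondExp P X (B n) * hypCondProbAux P (⋃ m, B m) (B n)
        = (∫ w in B n, X w ∂P) / (P (⋃ m, B m)).toReal := fun n => by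
      have hBn : P (B n) ≠ ⊤ := ne_top_of_le_ne_top hfin (measure_mono (Set.subset_iUnion B n))
      rw [hypCondProbAux_of_subset (Set.subset_iUnion B n) hU, mul_div_assoc',
        hypCondExp_mul_toReal X hBn]
    simpa only [hterm] using (hasSum_integral_iUnion hB hdisj hX).div_const _

lemma setIntegral_eq_toReal_mul_div (X : Ω → ℝ) {U : Set Ω} (hU : P U ≠ ⊤) :
    ∫ w in U, X w ∂P = (P U).toReal * ((∫ w in U, X w ∂P) / (P U).toReal) :=
  (mul_div_cancel_of_imp' fun h =>
    setIntegral_measure_zero _ ((ENNReal.toReal_eq_zero_iff _).mp h |>.resolve_right hU)).symm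

end

theorem condExp_subPartition_general {Ω : Type*} [MeasurableSpace Ω]
    (P₁ P₂ : Measure Ω) [IsFiniteMeasure P₁] [IsFiniteMeasure P₂]
    (X₁ X₂ : Ω → ℝ)
    (hX₁ : Integrable X₁ P₁) (hX₂ : Integrable X₂ P₂)
    (A : ℕ → Set Ω) (hAmeas : ∀ ι, MeasurableSet (A ι))
    (hAdisj : Pairwise (Function.onFun Disjoint A))
    (ι : ℕ → ℕ) (hι : Function.Injective ι) :
    ((hypCondExp P₁ X₁ (⋃ n, A (ι n)), hypCondExp P₂ X₂ (⋃ n, A (ι n))) *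
        ((P₁ (⋃ n, A (ι n))).toReal, (P₂ (⋃ n, A (ι n))).toReal) =
      (∫ w in ⋃ n, A (ι n), X₁ w ∂P₁, ∫ w in ⋃ n, A (ι n), X₂ w ∂P₂)) ∧
    ((∫ w in ⋃ n, A (ι n), X₁ w ∂P₁, ∫ w in ⋃ n, A (ι n), X₂ w ∂P₂) =
      ((P₁ (⋃ n, A (ι n))).toReal, (P₂ (⋃ n, A (ι n))).toReal) *
        ∑' n, (hypCondExp P₁ X₁ (A (ι n)), hypCondExp P₂ X₂ (A (ι n))) *
          (hypCondProbAux P₁ (⋃ m, A (ι m)) (A (ι n)),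
           hypCondProbAux P₂ (⋃ m, A (ι m)) (A (ι n)))) := by
  have hdisj : Pairwise (Function.onFun Disjoint fun n => A (ι n)) :=
    fun m n hmn => hAdisj (hι.ne hmn)
  have hsum₁ := hasSum_hypCondExp_mul_hypCondProbAux hX₁.integrableOn (fun n => hAmeas _) hdisj
    (measure_ne_top P₁ _)
  have hsum₂ := hasSum_hypCondExp_mul_hypCondProbAux hX₂.integrableOn (fun n => hAmeas _) hdisj
    (measure_ne_top P₂ _)
  refine ⟨Prod.ext (hypCondExp_mul_toReal X₁ (measure_ne_top P₁ _))
    (hypCondExp_mul_toReal X₂ (measure_ne_top P₂ _)), ?_⟩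
  simp only [Prod.mk_mul_mk]
  rw [(hsum₁.prodMk hsum₂).tsum_eq, Prod.mk_mul_mk]
  exact Prod.ext (setIntegral_eq_toReal_mul_div X₁ (measure_ne_top P₁ _))
    (setIntegral_eq_toReal_mul_div X₂ (measure_ne_top P₂ _))

/-- For a countable partition `ℙ = {A_ι}` of `Ω` with `P_𝔻(A_ι) ∈ 𝔻⁺ \ {(0,0)}` and a
sub-partition `𝒜 = {A_{ι_n}} ⊆ ℙ` with union `A`, one has
`E_A(X_𝔻) ⬝ P_𝔻(A) = ∫_A X_𝔻 dP_𝔻 = P_𝔻(A) ⬝ Σₙ E_{A_{ιₙ}}(X_𝔻) ⬝ P_𝔻(A_{ιₙ}/A)`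
(all products componentwise in `ℝ × ℝ`, integrals componentwise). -/
theorem condExp_subPartition {Ω : Type*} [MeasurableSpace Ω]
    (P₁ P₂ : Measure Ω) [IsFiniteMeasure P₁] [IsFiniteMeasure P₂]
    (hP : (P₁ Set.univ, P₂ Set.univ) ∈ ({(1, 1), (1, 0), (0, 1)} : Set (ENNReal × ENNReal)))
    (X₁ X₂ : Ω → ℝ)
    (hX : Measurable (fun w => (X₁ w, X₂ w)))
    (hX₁ : Integrable X₁ P₁) (hX₂ : Integrable X₂ P₂)
    (A : ℕ → Set Ω) (hAmeas : ∀ ι, MeasurableSet (A ι))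
    (hAdisj : Pairwise (Function.onFun Disjoint A))
    (hAcover : (⋃ ι, A ι) = Set.univ)
    (hApos : ∀ ι, ¬ (P₁ (A ι) = 0 ∧ P₂ (A ι) = 0))
    (ι : ℕ → ℕ) (hι : Function.Injective ι) :
    ((hypCondExp P₁ X₁ (⋃ n, A (ι n)), hypCondExp P₂ X₂ (⋃ n, A (ι n))) *
        ((P₁ (⋃ n, A (ι n))).toReal, (P₂ (⋃ n, A (ι n))).toReal) =
      (∫ w in ⋃ n, A (ι n), X₁ w ∂P₁, ∫ w in ⋃ n, A (ι n), X₂ w ∂P₂)) ∧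
    ((∫ w in ⋃ n, A (ι n), X₁ w ∂P₁, ∫ w in ⋃ n, A (ι n), X₂ w ∂P₂) =
      ((P₁ (⋃ n, A (ι n))).toReal, (P₂ (⋃ n, A (ι n))).toReal) *
        ∑' n, (hypCondExp P₁ X₁ (A (ι n)), hypCondExp P₂ X₂ (A (ι n))) *
          (hypCondProbAux P₁ (⋃ m, A (ι m)) (A (ι n)),
           hypCondProbAux P₂ (⋃ m, A (ι m)) (A (ι n)))) :=
  condExp_subPartition_general P₁ P₂ X₁ X₂ hX₁ hX₂ A hAmeas hAdisj ι hι
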